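/- arXiv:1712.10208 — 2 statements merged into one kernel-verified Lean document; each statement's English description precedes it below -/
import Mathlib

section
/- Let p > 1 and q ≥ 0 be real numbers. (i) If q = p−1, the function u(r) = e^{−(p−1)^{−1/p} r} satisfies u(0) = 1, lim_{r→∞} u(r) = 0, and the function r ↦ |u'(r)|^{p−2}u'(r) is differentiable on (0,∞) with derivative u(r)^q at every r > 0. (ii) If 0 ≤ q < p−1, set R = (p−1)^{1/p}(q+1)^{1/p} / (p^{1/p−1}(p−q−1)); then the function u defined by u(r) = (1 − r/R)^{p/(p−q−1)} for 0 ≤ r ≤ R and u(r) = 0 for r > R satisfies u(0) = 1, u(R) = 0, lim_{r→R⁻} u'(r) = 0, and r ↦ |u'(r)|^{p−2}u'(r) is differentiable on (0,R) with derivative u(r)^q. (iii) If q > p−1, set c = p^{1/p−1}(q+1−p)/((p−1)^{1/p}(q+1)^{1/p}); then u(r) = (1 + c r)^{−p/(q+1−p)} satisfies u(0) = 1, lim_{r→∞} u(r) = 0, and r ↦ |u'(r)|^{p−2}u'(r) is differentiable on (0,∞) with derivative u(r)^q. -/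
open Filter Set Topology MeasureTheory

/-!
Multiplying `(|u'|^{p-2}u')' = u^q` by `u'` and integrating from the free boundary (or from
infinity), where `u` and `u'` vanish, gives the first integral `(p-1)/p |u'|^p = u^{q+1}/(q+1)`,
i.e. `u' = -a u^{(q+1)/p}` with `a^p = p / ((p-1)(q+1))`. Conversely, along any positive solution
of this first-order equation the flux is `-a^{p-1} u^{(q+1)(p-1)/p}`, whose derivative is `u^q`.
Integrating it gives `u = (1 + κ r)^m` with `m = p/(p-1-q)` and `κ m = -a`, which is the compactly
supported profile for `q < p-1` and the algebraically decaying one for `q > p-1`, and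
`u = e^{-a r}` when `q = p-1`.
-/

noncomputable section

def pFlux (p : ℝ) (u : ℝ → ℝ) (s : ℝ) : ℝ := |deriv u s| ^ (p - 2) * deriv u s

lemma abs_neg_rpow_sub_two_mul_neg {y : ℝ} (p : ℝ) (hy : 0 < y) :
    |-y| ^ (p - 2) * -y = -y ^ (p - 1) := by
  rw [abs_neg, abs_of_pos hy, show p - 1 = p - 2 + 1 by ring, Real.rpow_add_one hy.ne']
  ring

theorem hasDerivAt_pFlux_of_firstIntegral {u : ℝ → ℝ} {p q a r : ℝ} (hp : p ≠ 0) (ha : 0 < a)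
    (hap : (p - 1) * (q + 1) * a ^ p = p)
    (hu : ∀ᶠ s in 𝓝 r, 0 < u s ∧ HasDerivAt u (-(a * u s ^ ((q + 1) / p))) s) :
    HasDerivAt (pFlux p u) (u r ^ q) r := by
  obtain ⟨hur, hdu⟩ := hu.self_of_nhds
  set E := (q + 1) / p * (p - 1)
  have hflux : pFlux p u =ᶠ[𝓝 r] fun s => -(a ^ (p - 1) * u s ^ E) := by
    filter_upwards [hu] with s ⟨hus, hds⟩
    rw [pFlux, hds.deriv, abs_neg_rpow_sub_two_mul_neg p (by positivity),
      Real.mul_rpow ha.le (by positivity), ← Real.rpow_mul hus.le]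
  refine (((hdu.rpow_const (Or.inl hur.ne')).const_mul _).neg.congr_of_eventuallyEq
    hflux).congr_deriv ?_
  have hexp : E - 1 + (q + 1) / p = q := by simp only [E]; field_simp; ring
  have hcoef : a ^ (p - 1) * a * E = 1 := by
    rw [← Real.rpow_add_one ha.ne', sub_add_cancel,
      show a ^ p * E = (p - 1) * (q + 1) * a ^ p / p by simp only [E]; ring, hap, div_self hp]
  calc -(a ^ (p - 1) * (-(a * u r ^ ((q + 1) / p)) * E * u r ^ (E - 1)))
      = a ^ (p - 1) * a * E * (u r ^ (E - 1) * u r ^ ((q + 1) / p)) := by ring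
    _ = u r ^ q := by rw [hcoef, one_mul, ← Real.rpow_add hur, hexp]

lemma hasDerivAt_one_add_mul_rpow {κ m θ a s : ℝ} (hm : m * θ = m - 1) (hκ : κ * m = -a)
    (hs : 0 < 1 + κ * s) :
    HasDerivAt (fun x => (1 + κ * x) ^ m) (-(a * ((1 + κ * s) ^ m) ^ θ)) s := by
  have h : HasDerivAt (fun x => (1 + κ * x) ^ m) (κ * 1 * m * (1 + κ * s) ^ (m - 1)) s :=
    (((hasDerivAt_id s).const_mul κ).const_add 1).rpow_const (Or.inl hs.ne')
  refine h.congr_deriv ?_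
  rw [← Real.rpow_mul hs.le, hm]
  linear_combination (1 + κ * s) ^ (m - 1) * hκ

lemma hasDerivAt_truncated_rpow {R m θ : ℝ} (hR : 0 < R) (hmθ : m * θ = m - 1) {u : ℝ → ℝ}
    (hu : ∀ r, u r = if r ≤ R then (1 - r / R) ^ m else 0) {r : ℝ} (hr : r < R) :
    0 < u r ∧ HasDerivAt u (-(m * R⁻¹ * u r ^ θ)) r := by
  have hb : 0 < 1 + -R⁻¹ * r := by
    have := (div_lt_one hR).mpr hr
    rw [neg_mul, ← div_eq_inv_mul]
    linarith
  have hloc : u =ᶠ[𝓝 r] fun x => (1 + -R⁻¹ * x) ^ m := by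
    filter_upwards [Iio_mem_nhds hr] with x hx
    rw [hu, if_pos hx.le, neg_mul, ← div_eq_inv_mul, sub_eq_add_neg]
  rw [hloc.eq_of_nhds]
  exact ⟨Real.rpow_pos_of_pos hb _,
    (hasDerivAt_one_add_mul_rpow hmθ (by ring) hb).congr_of_eventuallyEq hloc⟩

lemma sub_one_mul_mul_div_mul_rpow_eq {p t A c : ℝ} (hp : 1 < p) (hA : 0 < A) (ht : t ≠ 0)
    (hc : c = p ^ (1 / p - 1) * t / ((p - 1) ^ (1 / p) * A ^ (1 / p))) :
    (p - 1) * A * (p / t * c) ^ p = p := by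
  have hp0 : 0 < p := by linarith
  have hp1 : 0 < p - 1 := by linarith
  have hpp : p ^ (1 / p) = p * p ^ (1 / p - 1) := by
    rw [mul_comm, ← Real.rpow_add_one hp0.ne', sub_add_cancel]
  have hspeed : p / t * c = (p / ((p - 1) * A)) ^ (1 / p) := by
    have h1 : (p - 1) ^ (1 / p) ≠ 0 := (Real.rpow_pos_of_pos hp1 _).ne'
    have h2 : A ^ (1 / p) ≠ 0 := (Real.rpow_pos_of_pos hA _).ne'
    rw [Real.div_rpow hp0.le (mul_pos hp1 hA).le, Real.mul_rpow hp1.le hA.le, hc, hpp]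
    field_simp
  rw [hspeed, one_div, Real.rpow_inv_rpow (div_pos hp0 (mul_pos hp1 hA)).le hp0.ne']
  field_simp

theorem pLaplace_exp_solution {p : ℝ} (hp : 1 < p) {u : ℝ → ℝ}
    (hu : ∀ r, u r = Real.exp (-((p - 1) ^ (-(1 / p)) * r))) :
    u 0 = 1 ∧ Tendsto u atTop (𝓝 0) ∧ ∀ r, HasDerivAt (pFlux p u) (u r ^ (p - 1)) r := by
  set a := (p - 1) ^ (-(1 / p))
  have hp0 : p ≠ 0 := by positivity
  have hp1 : 0 < p - 1 := by linarith
  have ha : 0 < a := Real.rpow_pos_of_pos hp1 _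
  have hap : (p - 1) * (p - 1 + 1) * a ^ p = p := by
    rw [← Real.rpow_mul hp1.le, show -(1 / p) * p = -1 by field_simp, Real.rpow_neg_one,
      sub_add_cancel, mul_comm (p - 1), mul_inv_cancel_right₀ hp1.ne']
  obtain rfl : u = fun r => Real.exp (-(a * r)) := funext hu
  refine ⟨by simp, ?_, fun r => hasDerivAt_pFlux_of_firstIntegral hp0 ha hap
    (Eventually.of_forall fun s => ⟨Real.exp_pos _, ?_⟩)⟩
  · exact Real.tendsto_exp_atBot.comp
      (tendsto_neg_atTop_atBot.comp (tendsto_id.const_mul_atTop ha))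
  · rw [sub_add_cancel, div_self hp0, Real.rpow_one]
    simpa [mul_comm] using ((hasDerivAt_id s).const_mul a).neg.exp

theorem pLaplace_compactSupport_solution {p q R : ℝ} (hp : 1 < p) (hq : -1 < q)
    (hqp : q < p - 1)
    (hR : R = (p - 1) ^ (1 / p) * (q + 1) ^ (1 / p) / (p ^ (1 / p - 1) * (p - q - 1)))
    {u : ℝ → ℝ} (hu : ∀ r, u r = if r ≤ R then (1 - r / R) ^ (p / (p - q - 1)) else 0) :
    u 0 = 1 ∧ u R = 0 ∧ Tendsto (deriv u) (𝓝[<] R) (𝓝 0) ∧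
      ∀ r < R, HasDerivAt (pFlux p u) (u r ^ q) r := by
  have hp0 : 0 < p := by linarith
  have hp1 : 0 < p - 1 := by linarith
  have ht : 0 < p - q - 1 := by linarith
  have hA : 0 < q + 1 := by linarith
  have hR0 : 0 < R := by
    rw [hR]
    exact div_pos (mul_pos (Real.rpow_pos_of_pos hp1 _) (Real.rpow_pos_of_pos hA _))
      (mul_pos (Real.rpow_pos_of_pos hp0 _) ht)
  set m := p / (p - q - 1)
  set θ := (q + 1) / p
  set a := m * R⁻¹
  have hm : 0 < m := div_pos hp0 ht
  have hθ : 0 < θ := div_pos hA hp0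
  have ha : 0 < a := mul_pos hm (inv_pos.mpr hR0)
  have hap : (p - 1) * (q + 1) * a ^ p = p :=
    sub_one_mul_mul_div_mul_rpow_eq hp hA ht.ne' (by rw [hR, inv_div])
  have hmθ : m * θ = m - 1 := by simp only [m, θ]; field_simp; ring
  have hderiv : ∀ r < R, 0 < u r ∧ HasDerivAt u (-(a * u r ^ θ)) r :=
    fun r hr => hasDerivAt_truncated_rpow hR0 hmθ hu hr
  refine ⟨?_, ?_, ?_, fun r hr => hasDerivAt_pFlux_of_firstIntegral hp0.ne' ha hap ?_⟩
  · rw [hu, if_pos hR0.le]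
    simp
  · rw [hu, if_pos le_rfl, div_self hR0.ne', sub_self, Real.zero_rpow hm.ne']
  · have hu_lim : Tendsto u (𝓝[<] R) (𝓝 0) := by
      have h : Tendsto (fun x => (1 - x / R) ^ m) (𝓝 R) (𝓝 ((1 - R / R) ^ m)) :=
        ((continuous_const.sub (continuous_id.div_const R)).tendsto R).rpow_const
          (Or.inr hm.le)
      rw [div_self hR0.ne', sub_self, Real.zero_rpow hm.ne'] at h
      refine (h.mono_left nhdsWithin_le_nhds).congr' (eventually_nhdsWithin_of_forall ?_)
      intro x (hx : x < R)
      rw [hu, if_pos hx.le]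
    have h := ((hu_lim.rpow_const (Or.inr hθ.le)).const_mul a).neg
    rw [Real.zero_rpow hθ.ne', mul_zero, neg_zero] at h
    exact h.congr' (eventually_nhdsWithin_of_forall fun r hr => ((hderiv r hr).2.deriv).symm)
  · filter_upwards [Iio_mem_nhds hr] with s hs using hderiv s hs

theorem pLaplace_algebraicDecay_solution {p q c : ℝ} (hp : 1 < p) (hqp : p - 1 < q)
    (hc : c = p ^ (1 / p - 1) * (q + 1 - p) / ((p - 1) ^ (1 / p) * (q + 1) ^ (1 / p)))
    {u : ℝ → ℝ} (hu : ∀ r, u r = (1 + c * r) ^ (-(p / (q + 1 - p)))) :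
    u 0 = 1 ∧ Tendsto u atTop (𝓝 0) ∧
      ∀ r ∈ Ioi (0 : ℝ), HasDerivAt (pFlux p u) (u r ^ q) r := by
  have hp0 : 0 < p := by linarith
  have hp1 : 0 < p - 1 := by linarith
  have ht : 0 < q + 1 - p := by linarith
  have hA : 0 < q + 1 := by linarith
  have hc0 : 0 < c := by
    rw [hc]
    exact div_pos (mul_pos (Real.rpow_pos_of_pos hp0 _) ht)
      (mul_pos (Real.rpow_pos_of_pos hp1 _) (Real.rpow_pos_of_pos hA _))
  set m := p / (q + 1 - p)
  set a := m * c
  have hm : 0 < m := div_pos hp0 ht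
  have ha : 0 < a := mul_pos hm hc0
  have hap : (p - 1) * (q + 1) * a ^ p = p := sub_one_mul_mul_div_mul_rpow_eq hp hA ht.ne' hc
  have hmθ : -m * ((q + 1) / p) = -m - 1 := by simp only [m]; field_simp; ring
  obtain rfl : u = fun r => (1 + c * r) ^ (-m) := funext hu
  refine ⟨by simp, ?_, fun r hr => hasDerivAt_pFlux_of_firstIntegral hp0.ne' ha hap ?_⟩
  · exact (tendsto_rpow_neg_atTop hm).comp
      (tendsto_atTop_add_const_left _ 1 (tendsto_id.const_mul_atTop hc0))
  · filter_upwards [Ioi_mem_nhds hr] with s (hs : 0 < s)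
    have hb : 0 < 1 + c * s := by positivity
    exact ⟨Real.rpow_pos_of_pos hb _, hasDerivAt_one_add_mul_rpow hmθ (by ring) hb⟩

end

/-- Closed form solutions of the one-dimensional Euler-Lagrange
problem `(|u'|^{p-2}u')' = u^q` with `u(0)=1`, in the three regimes
`q = p-1`, `q < p-1` (compact support, zero contact angle) and `q > p-1`. -/
theorem stmt8 (p q : ℝ) (hp : 1 < p) (hq : 0 ≤ q) :
    (q = p - 1 → ∀ u : ℝ → ℝ,
      (∀ r, u r = Real.exp (-((p - 1) ^ (-(1 / p)) * r))) →
      u 0 = 1 ∧ Tendsto u atTop (𝓝 0) ∧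
      ∀ r ∈ Ioi (0:ℝ),
        HasDerivAt (fun s => |deriv u s| ^ (p - 2) * deriv u s) (u r ^ q) r) ∧
    (q < p - 1 → ∀ R : ℝ,
      R = (p - 1) ^ (1 / p) * (q + 1) ^ (1 / p) / (p ^ (1 / p - 1) * (p - q - 1)) →
      ∀ u : ℝ → ℝ,
      (∀ r, u r = if r ≤ R then (1 - r / R) ^ (p / (p - q - 1)) else 0) →
      u 0 = 1 ∧ u R = 0 ∧ Tendsto (deriv u) (𝓝[<] R) (𝓝 0) ∧
      ∀ r ∈ Ioo (0:ℝ) R,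
        HasDerivAt (fun s => |deriv u s| ^ (p - 2) * deriv u s) (u r ^ q) r) ∧
    (p - 1 < q → ∀ c : ℝ,
      c = p ^ (1 / p - 1) * (q + 1 - p) / ((p - 1) ^ (1 / p) * (q + 1) ^ (1 / p)) →
      ∀ u : ℝ → ℝ,
      (∀ r, u r = (1 + c * r) ^ (-(p / (q + 1 - p)))) →
      u 0 = 1 ∧ Tendsto u atTop (𝓝 0) ∧
      ∀ r ∈ Ioi (0:ℝ),
        HasDerivAt (fun s => |deriv u s| ^ (p - 2) * deriv u s) (u r ^ q) r) := by
  refine ⟨fun hqe u hu => ?_, fun hqp R hR u hu => ?_, fun hqp c hc u hu => ?_⟩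
  · subst hqe
    obtain ⟨h0, hlim, hflux⟩ := pLaplace_exp_solution hp hu
    exact ⟨h0, hlim, fun r _ => hflux r⟩
  · obtain ⟨h0, hR, hlim, hflux⟩ := pLaplace_compactSupport_solution hp (by linarith) hqp hR hu
    exact ⟨h0, hR, hlim, fun r hr => hflux r hr.2⟩
  · exact pLaplace_algebraicDecay_solution hp hqp hc hu
end

section
/- Let d ≥ 1 be an integer and p, q, m real numbers with p > 1, 0 < q < p − 1, and m > q. Then there is no continuously differentiable function u : [0,∞) → ℝ such that u(r) > 0 and u'(r) ≤ 0 for all r ≥ 0, u'(0) = 0, lim_{r→∞} u(r) = 0, lim_{r→∞} u'(r) = 0, and the function r ↦ r^{d−1}|u'(r)|^{p−2}u'(r) is differentiable on (0,∞) with derivative r^{d−1}(u(r)^q − u(r)^m) at every r > 0. (Equivalently, every nonincreasing solution of Δ_p u + u^m = u^q with u'(0)=0 must vanish at some finite radius.) -/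
/-!
Along a nonincreasing solution, `E = (p-1)/p |u'|^p + u^(m+1)/(m+1) - u^(q+1)/(q+1)` has
`E' = (d-1)/r · u' |u'|^(p-1) ≤ 0`. Since `u, u' → 0`, `E → 0`, so `E ≥ 0`. Where `u` is small
the term `u^(m+1)` is dominated by `u^(q+1)`, and `E ≥ 0` yields `-u' ≥ c u^β` with
`β = (q+1)/p < 1`. Then `u^(1-β)` decreases at least linearly, so the positive function `u`
must vanish at a finite radius.
-/

open Filter Set Topology

theorem HasDerivAt.of_pow_mul {f : ℝ → ℝ} {n : ℕ} {r h : ℝ} (hr : r ≠ 0)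
    (hf : HasDerivAt (fun s => s ^ n * f s) (r ^ n * h) r) :
    HasDerivAt f (h - n / r * f r) r := by
  have hquot := ((hasDerivAt_pow n r).inv (pow_ne_zero n hr)).mul hf
  have heq : (fun s => (s ^ n)⁻¹ * (s ^ n * f s)) =ᶠ[𝓝 r] f := by
    filter_upwards [eventually_ne_nhds hr] with s hs
    rw [inv_mul_cancel_left₀ (pow_ne_zero n hs)]
  refine (hquot.congr_of_eventuallyEq heq.symm).congr_deriv ?_
  cases n with
  | zero => simp
  | succ k =>
    simp only [Pi.inv_apply, Nat.add_sub_cancel, pow_succ]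
    field_simp
    push_cast
    ring

theorem antitoneOn_Ioi_of_hasDerivAt_nonpos {f f' : ℝ → ℝ} {a : ℝ}
    (hf : ∀ x > a, HasDerivAt f (f' x) x) (hf' : ∀ x > a, f' x ≤ 0) :
    AntitoneOn f (Ioi a) := by
  refine antitoneOn_of_hasDerivWithinAt_nonpos (f' := f') (convex_Ioi a)
    (fun x hx => (hf x hx).continuousAt.continuousWithinAt) (fun x hx => ?_) (fun x hx => ?_)
  · rw [interior_Ioi] at hx ⊢
    exact (hf x hx).hasDerivWithinAt
  · rw [interior_Ioi] at hx
    exact hf' x hx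

theorem abs_rpow_sub_two_mul_of_nonpos {x p : ℝ} (hx : x ≤ 0) (hp : p ≠ 1) :
    |x| ^ (p - 2) * x = -|x| ^ (p - 1) := by
  rw [show p - 1 = p - 2 + 1 by ring,
    Real.rpow_add' (abs_nonneg x) (by intro h; exact hp (by linarith)), Real.rpow_one,
    abs_of_nonpos hx]
  ring

theorem antitoneOn_energy {p c : ℝ} (hp : 1 < p) (hc : 0 ≤ c) {u u' f G : ℝ → ℝ}
    (hu : ∀ r > 0, HasDerivAt u (u' r) r) (hu' : ∀ r > 0, u' r ≤ 0)
    (hflux : ∀ r > 0, HasDerivAt (fun s => |u' s| ^ (p - 2) * u' s)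
      (f (u r) - c / r * (|u' r| ^ (p - 2) * u' r)) r)
    (hG : ∀ r > 0, HasDerivAt G (-f (u r)) (u r)) :
    AntitoneOn (fun r => (p - 1) / p * |u' r| ^ p + G (u r)) (Ioi 0) := by
  have hp1 : p - 1 ≠ 0 := by linarith
  have hflux_eq : ∀ r > 0, |u' r| ^ (p - 2) * u' r = -|u' r| ^ (p - 1) := fun r hr =>
    abs_rpow_sub_two_mul_of_nonpos (hu' r hr) hp.ne'
  have hγ : p / (p - 1) - 1 = (p - 1)⁻¹ := by field_simp; ring
  refine antitoneOn_Ioi_of_hasDerivAt_nonpos (f' := fun r => c / r * (u' r * |u' r| ^ (p - 1)))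
    (fun r hr => ?_) (fun r hr => ?_)
  · -- `u'` need not be differentiable: `|u'|^p` is differentiated as `(-|u'|^(p-2) u')^(p/(p-1))`.
    have hE : HasDerivAt (fun s => (p - 1) / p * (-(|u' s| ^ (p - 2) * u' s)) ^ (p / (p - 1))
        + G (u s)) _ r :=
      (((hflux r hr).neg.rpow_const
        (Or.inr ((le_div_iff₀ (by linarith)).2 (by linarith)))).const_mul _).add
        ((hG r hr).comp r (hu r hr))
    refine (hE.congr_of_eventuallyEq ?_).congr_deriv ?_
    · filter_upwards [Ioi_mem_nhds hr] with s hs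
      rw [hflux_eq s hs, neg_neg, ← Real.rpow_mul (abs_nonneg _), mul_div_cancel₀ _ hp1]
    · simp only [Pi.neg_apply, hflux_eq r hr, neg_neg]
      rw [hγ, Real.rpow_rpow_inv (abs_nonneg _) hp1, abs_of_nonpos (hu' r hr)]
      field_simp
      ring
  · exact mul_nonpos_of_nonneg_of_nonpos (div_nonneg hc hr.le)
      (mul_nonpos_of_nonpos_of_nonneg (hu' r hr) (by positivity))

/-- The energy of `Δ_p u + u^m = u^q` at a radius where `u' = x` and `u = v`. -/
noncomputable def laneEmdenEnergy (p q m x v : ℝ) : ℝ :=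
  (p - 1) / p * |x| ^ p + (v ^ (m + 1) / (m + 1) - v ^ (q + 1) / (q + 1))

theorem hasDerivAt_laneEmden_potential {q m v : ℝ} (hq : q + 1 ≠ 0) (hm : m + 1 ≠ 0)
    (hv : v ≠ 0) :
    HasDerivAt (fun x => x ^ (m + 1) / (m + 1) - x ^ (q + 1) / (q + 1)) (-(v ^ q - v ^ m)) v := by
  refine ((((hasDerivAt_id v).rpow_const (Or.inl hv)).div_const (m + 1)).sub
    (((hasDerivAt_id v).rpow_const (Or.inl hv)).div_const (q + 1))).congr_deriv ?_
  simp only [id, add_sub_cancel_right]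
  field_simp
  ring

theorem tendsto_laneEmdenEnergy {p q m : ℝ} (hp : 0 < p) (hq : 0 < q + 1) (hm : 0 < m + 1)
    {u u' : ℝ → ℝ} (hu : Tendsto u atTop (𝓝 0)) (hu' : Tendsto u' atTop (𝓝 0)) :
    Tendsto (fun r => laneEmdenEnergy p q m (u' r) (u r)) atTop (𝓝 0) := by
  unfold laneEmdenEnergy
  have := ((hu'.abs.rpow_const (Or.inr hp.le)).const_mul ((p - 1) / p)).add
    (((hu.rpow_const (Or.inr hm.le)).div_const (m + 1)).sub
      ((hu.rpow_const (Or.inr hq.le)).div_const (q + 1)))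
  simpa [Real.zero_rpow hp.ne', Real.zero_rpow hm.ne', Real.zero_rpow hq.ne'] using this

theorem eventually_rpow_le_mul_rpow {a b ε : ℝ} (hab : a < b) (hε : 0 < ε) :
    ∀ᶠ v in 𝓝[>] (0 : ℝ), v ^ b ≤ ε * v ^ a := by
  have hba : 0 < b - a := sub_pos.2 hab
  have hlim : Tendsto (fun v : ℝ => v ^ (b - a)) (𝓝[>] 0) (𝓝 0) := by
    simpa [Real.zero_rpow hba.ne'] using
      ((continuous_id.rpow_const fun _ => Or.inr hba.le).tendsto 0).mono_left nhdsWithin_le_nhds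
  filter_upwards [self_mem_nhdsWithin, hlim.eventually (ge_mem_nhds hε)] with v hv hsmall
  rw [show b = b - a + a by ring, Real.rpow_add hv]
  exact mul_le_mul_of_nonneg_right hsmall (Real.rpow_nonneg hv.le a)

theorem le_neg_mul_rpow_of_mul_rpow_le_abs_rpow {x y a c p : ℝ} (hx : x ≤ 0) (hy : 0 ≤ y)
    (hc : 0 ≤ c) (hp : 0 < p) (h : c * y ^ a ≤ |x| ^ p) : x ≤ -c ^ p⁻¹ * y ^ (a * p⁻¹) := by
  have := Real.rpow_le_rpow (by positivity) h (inv_nonneg.2 hp.le)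
  rw [Real.rpow_rpow_inv (abs_nonneg x) hp.ne', Real.mul_rpow hc (by positivity),
    ← Real.rpow_mul hy, abs_of_nonpos hx] at this
  linarith

theorem le_neg_mul_rpow_of_laneEmdenEnergy_nonneg {p q m x v : ℝ} (hp : 1 < p)
    (hq : 0 < q + 1) (hm : 0 < m + 1) (hx : x ≤ 0) (hv : 0 ≤ v)
    (hE : 0 ≤ laneEmdenEnergy p q m x v)
    (hv_small : v ^ (m + 1) ≤ (m + 1) / (2 * (q + 1)) * v ^ (q + 1)) :
    x ≤ -(p / (2 * (p - 1) * (q + 1))) ^ p⁻¹ * v ^ ((q + 1) * p⁻¹) := by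
  have hp1 : 0 < p - 1 := by linarith
  refine le_neg_mul_rpow_of_mul_rpow_le_abs_rpow hx hv (by positivity) (by linarith) ?_
  have hZ : v ^ (m + 1) / (m + 1) ≤ v ^ (q + 1) / (2 * (q + 1)) := by
    rw [div_le_iff₀ hm]
    linarith [show v ^ (q + 1) / (2 * (q + 1)) * (m + 1)
      = (m + 1) / (2 * (q + 1)) * v ^ (q + 1) by ring]
  have hhalf : v ^ (q + 1) / (q + 1) = 2 * (v ^ (q + 1) / (2 * (q + 1))) := by
    field_simp
  unfold laneEmdenEnergy at hE
  calc p / (2 * (p - 1) * (q + 1)) * v ^ (q + 1)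
      = p / (p - 1) * (v ^ (q + 1) / (2 * (q + 1))) := by field_simp
    _ ≤ p / (p - 1) * ((p - 1) / p * |x| ^ p) := by gcongr; linarith
    _ = |x| ^ p := by field_simp

/-- Finite-time extinction: `u^(1-β) + (1-β) c r` is nonincreasing, yet would tend to `∞`. -/
theorem not_forall_pos_of_deriv_le_neg_mul_rpow {u u' : ℝ → ℝ} {R c β : ℝ} (hc : 0 < c)
    (hβ : β < 1) (hu : ∀ r > R, HasDerivAt u (u' r) r) (hu' : ∀ r > R, u' r ≤ -c * u r ^ β) :
    ¬ ∀ r > R, 0 < u r := by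
  intro hpos
  set K := (1 - β) * c
  have hK : 0 < K := mul_pos (sub_pos.2 hβ) hc
  have hanti : AntitoneOn (fun r => u r ^ (1 - β) + K * r) (Ioi R) := by
    refine antitoneOn_Ioi_of_hasDerivAt_nonpos
      (fun r hr => ((hu r hr).rpow_const (Or.inl (hpos r hr).ne')).add
        ((hasDerivAt_id r).const_mul K)) (fun r hr => ?_)
    have hur := hpos r hr
    have hcancel : u r ^ (1 - β - 1) * u r ^ β = 1 := by
      rw [← Real.rpow_add hur]; simp
    have := mul_le_mul_of_nonneg_right (hu' r hr)
      (mul_nonneg (sub_pos.2 hβ).le (Real.rpow_pos_of_pos hur (1 - β - 1)).le)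
    simp only [mul_one]
    nlinarith
  set r₀ := R + 1
  set M := u r₀ ^ (1 - β)
  have hr₀ : r₀ ∈ Ioi R := by simp [r₀]
  have hM : 0 < M / K := div_pos (Real.rpow_pos_of_pos (hpos r₀ hr₀) _) hK
  have hr₁ : r₀ + M / K ∈ Ioi R := by simp only [mem_Ioi, r₀]; linarith
  have key := hanti hr₀ hr₁ (by linarith)
  have : 0 < u (r₀ + M / K) ^ (1 - β) := Real.rpow_pos_of_pos (hpos _ hr₁) _
  simp only at key
  rw [mul_add, mul_div_cancel₀ M hK.ne'] at key
  linarith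

theorem stmt12_general (d : ℕ) (p q m : ℝ) (hp : 1 < p) (hq0 : 0 < q)
    (hq : q < p - 1) (hm : q < m) :
    ¬ ∃ u u' : ℝ → ℝ,
      (∀ r ∈ Ici (0:ℝ), HasDerivWithinAt u (u' r) (Ici 0) r) ∧
      ContinuousOn u' (Ici 0) ∧
      (∀ r ∈ Ici (0:ℝ), 0 < u r) ∧
      (∀ r ∈ Ici (0:ℝ), u' r ≤ 0) ∧
      u' 0 = 0 ∧
      Tendsto u atTop (𝓝 0) ∧
      Tendsto u' atTop (𝓝 0) ∧
      (∀ r ∈ Ioi (0:ℝ),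
        HasDerivAt (fun s => s ^ (d - 1) * |u' s| ^ (p - 2) * u' s)
          (r ^ (d - 1) * (u r ^ q - u r ^ m)) r) := by
  rintro ⟨u, u', hu, -, hpos, hu', -, hu_lim, hu'_lim, heq⟩
  have hq1 : 0 < q + 1 := by linarith
  have hm1 : 0 < m + 1 := by linarith
  have hu_at : ∀ r > 0, HasDerivAt u (u' r) r := fun r hr =>
    (hu r hr.le).hasDerivAt (Ici_mem_nhds hr)
  have hE_anti : AntitoneOn (fun r => laneEmdenEnergy p q m (u' r) (u r)) (Ioi 0) :=
    antitoneOn_energy (f := fun x => x ^ q - x ^ m)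
      (G := fun x => x ^ (m + 1) / (m + 1) - x ^ (q + 1) / (q + 1)) hp (Nat.cast_nonneg (d - 1)) hu_at (fun r hr => hu' r hr.le)
      (fun r hr => HasDerivAt.of_pow_mul hr.ne' (by simpa only [mul_assoc] using heq r hr))
      (fun r hr => hasDerivAt_laneEmden_potential hq1.ne' hm1.ne' (hpos r hr.le).ne')
  have hE_nonneg : ∀ r > 0, 0 ≤ laneEmdenEnergy p q m (u' r) (u r) := fun r hr =>
    le_of_tendsto (tendsto_laneEmdenEnergy (by linarith) hq1 hm1 hu_lim hu'_lim)
      (eventually_atTop.2 ⟨r, fun s hs => hE_anti hr (hr.trans_le hs) hs⟩)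
  have hu_small : ∀ᶠ r in atTop, u r ^ (m + 1) ≤ (m + 1) / (2 * (q + 1)) * u r ^ (q + 1) :=
    (tendsto_nhdsWithin_iff.2 ⟨hu_lim, (eventually_ge_atTop 0).mono hpos⟩).eventually
      (eventually_rpow_le_mul_rpow (by linarith) (by positivity))
  obtain ⟨R, hR⟩ := eventually_atTop.1 (hu_small.and (eventually_gt_atTop 0))
  refine not_forall_pos_of_deriv_le_neg_mul_rpow (R := R) (by positivity) ?_
    (fun r hr => hu_at r (hR r hr.le).2)
    (fun r hr => le_neg_mul_rpow_of_laneEmdenEnergy_nonneg hp hq1 hm1 (hu' r (hR r hr.le).2.le)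
      (hpos r (hR r hr.le).2.le).le (hE_nonneg r (hR r hr.le).2) (hR r hr.le).1)
    (fun r hr => hpos r (hR r hr.le).2.le)
  rw [← div_eq_mul_inv, div_lt_one (by linarith)]
  linarith

/-- For `p > 1`, `0 < q < p-1`, `m > q`, every positive nonincreasing
`C¹` solution on `[0,∞)` of the radial generalized Lane-Emden equation
`Δ_p u + u^m = u^q` with `u'(0) = 0` must vanish at a finite radius: no such
everywhere-positive solution tending to `0` at infinity exists. -/
theorem stmt12 (d : ℕ) (hd : 1 ≤ d) (p q m : ℝ) (hp : 1 < p) (hq0 : 0 < q)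
    (hq : q < p - 1) (hm : q < m) :
    ¬ ∃ u u' : ℝ → ℝ,
      (∀ r ∈ Ici (0:ℝ), HasDerivWithinAt u (u' r) (Ici 0) r) ∧
      ContinuousOn u' (Ici 0) ∧
      (∀ r ∈ Ici (0:ℝ), 0 < u r) ∧
      (∀ r ∈ Ici (0:ℝ), u' r ≤ 0) ∧
      u' 0 = 0 ∧
      Tendsto u atTop (𝓝 0) ∧
      Tendsto u' atTop (𝓝 0) ∧
      (∀ r ∈ Ioi (0:ℝ),
        HasDerivAt (fun s => s ^ (d - 1) * |u' s| ^ (p - 2) * u' s)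
          (r ^ (d - 1) * (u r ^ q - u r ^ m)) r) :=
  stmt12_general d p q m hp hq0 hq hm
end
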